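/- Let T be a finite triangle mesh with face set F. The energy 𝓔(A) = Σ_{t ∈ F} [Λ(α_t) + Λ(β_t) + Λ(γ_t)] is concave on the angle structure space A_T = {angle assignments with α_t, β_t, γ_t > 0 and α_t + β_t + γ_t = π for each face t}, and strictly concave on A_T modulo nothing (strictly concave as a function of the independent variables (α_t, β_t) per face). -/

import Mathlib

/-!
Along a segment in the angle space of one face, the three angles move affinely with velocities
`u, v, w` summing to `0`. Since `Λ'' = -cot`, the second derivative of the face energy along the
segment is `-(u² cot α + v² cot β + w² cot γ)`. For the angles of a triangle
`cot α cot β + cot β cot γ + cot γ cot α = 1` and `cot α + cot γ = sin β / (sin α sin γ) > 0`,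
so this quadratic form in `(u, v)` is positive definite, and the face energy is strictly concave
in `(α, β)`. A sum of strictly concave functions of independent variables is strictly concave,
and the energy in all three angles is the two-angle energy composed with a linear map.
-/

open Real MeasureTheory intervalIntegral

/-- The Lobachevsky function. -/
noncomputable def lob (x : ℝ) : ℝ := -∫ t in (0:ℝ)..x, Real.log |2 * Real.sin t|

open Set

theorem intervalIntegrable_log_abs_two_mul_sin (a b : ℝ) :
    IntervalIntegrable (fun t => log |2 * sin t|) volume a b :=
  (analyticOnNhd_const.mul analyticOnNhd_sin).meromorphicOn.intervalIntegrable_log_norm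

theorem hasDerivAt_lob {x : ℝ} (hx : sin x ≠ 0) : HasDerivAt lob (-log (2 * sin x)) x := by
  have hcont : ContinuousAt (fun t => log |2 * sin t|) x :=
    (continuous_const.mul continuous_sin).abs.continuousAt.log (by simp [hx])
  have hmeas : Measurable fun t => log |2 * sin t| := by fun_prop
  -- `log` is even, so the absolute value in the integrand disappears from the derivative.
  have h := (integral_hasDerivAt_right (intervalIntegrable_log_abs_two_mul_sin 0 x)
    hmeas.stronglyMeasurable.stronglyMeasurableAtFilter hcont).neg
  rwa [log_abs] at h

theorem hasDerivAt_neg_log_two_mul_sin {x : ℝ} (hx : sin x ≠ 0) :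
    HasDerivAt (fun y => -log (2 * sin y)) (-cot x) x := by
  refine (((hasDerivAt_sin x).const_mul 2).log (by simp [hx])).neg.congr_deriv ?_
  rw [cot_eq_cos_div_sin]
  field_simp

theorem strictConcaveOn_of_hasDerivAt2_neg {D : Set ℝ} (hD : Convex ℝ D) {f f' f'' : ℝ → ℝ}
    (hf : ∀ x ∈ D, HasDerivAt f (f' x) x) (hf' : ∀ x ∈ D, HasDerivAt f' (f'' x) x)
    (hf'' : ∀ x ∈ D, f'' x < 0) : StrictConcaveOn ℝ D f := by
  have hanti : StrictAntiOn f' D := strictAntiOn_of_deriv_neg hD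
    (fun x hx => (hf' x hx).continuousAt.continuousWithinAt)
    (fun x hx => (hf' x (interior_subset hx)).deriv ▸ hf'' x (interior_subset hx))
  refine StrictAntiOn.strictConcaveOn_of_deriv hD
    (fun x hx => (hf x hx).continuousAt.continuousWithinAt) fun x hx y hy hxy => ?_
  rw [(hf x (interior_subset hx)).deriv, (hf y (interior_subset hy)).deriv]
  exact hanti (interior_subset hx) (interior_subset hy) hxy

theorem cot_add_cot {p q : ℝ} (hp : sin p ≠ 0) (hq : sin q ≠ 0) :
    cot p + cot q = sin (p + q) / (sin p * sin q) := by
  rw [cot_eq_cos_div_sin, cot_eq_cos_div_sin, sin_add]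
  field_simp
  ring

theorem cot_mul_cot_add_cot_mul_cot_add_cot_mul_cot {p q r : ℝ} (hp : sin p ≠ 0) (hq : sin q ≠ 0)
    (hr : sin r ≠ 0) (hpqr : p + q + r = π) :
    cot p * cot q + cot q * cot r + cot r * cot p = 1 := by
  obtain rfl : r = π - (p + q) := by linarith
  rw [sin_pi_sub] at hr
  simp only [cot_eq_cos_div_sin, cos_pi_sub, sin_pi_sub]
  field_simp
  rw [cos_add, sin_add]
  ring

theorem quadratic_pos_of_mul_add_mul_add_mul_eq_one {a b c u v w : ℝ} (hac : 0 < a + c)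
    (habc : a * b + b * c + c * a = 1) (huvw : u + v + w = 0) (huv : u ≠ 0 ∨ v ≠ 0) :
    0 < a * u ^ 2 + b * v ^ 2 + c * w ^ 2 := by
  obtain rfl : w = -(u + v) := by linarith
  have key : (a + c) * (a * u ^ 2 + b * v ^ 2 + c * (-(u + v)) ^ 2)
      = ((a + c) * u + c * v) ^ 2 + v ^ 2 := by
    linear_combination v ^ 2 * habc
  have hsq : 0 < ((a + c) * u + c * v) ^ 2 + v ^ 2 := by
    by_cases hv : v = 0
    · have hu : u ≠ 0 := huv.resolve_right (not_not.mpr hv)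
      subst hv
      simpa using sq_pos_of_ne_zero (mul_ne_zero hac.ne' hu)
    · positivity
  exact pos_of_mul_pos_right (key ▸ hsq) hac.le

theorem cot_mul_sq_add_cot_mul_sq_add_cot_mul_sq_pos {p q r u v w : ℝ}
    (hp : 0 < p) (hq : 0 < q) (hr : 0 < r) (hpqr : p + q + r = π) (huvw : u + v + w = 0)
    (huv : u ≠ 0 ∨ v ≠ 0) :
    0 < cot p * u ^ 2 + cot q * v ^ 2 + cot r * w ^ 2 := by
  have sp := sin_pos_of_pos_of_lt_pi hp (by linarith)
  have sq := sin_pos_of_pos_of_lt_pi hq (by linarith)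
  have sr := sin_pos_of_pos_of_lt_pi hr (by linarith)
  have hpr : 0 < cot p + cot r := by
    rw [cot_add_cot sp.ne' sr.ne', show p + r = π - q by linarith, sin_pi_sub]
    positivity
  exact quadratic_pos_of_mul_add_mul_add_mul_eq_one hpr
    (cot_mul_cot_add_cot_mul_cot_add_cot_mul_cot sp.ne' sq.ne' sr.ne' hpqr) huvw huv

theorem strictConcaveOn_lob_add_lob_add_lob_of_line {D : Set ℝ} (hD : Convex ℝ D)
    {p q r u v w : ℝ} (hpqr : p + q + r = π) (huvw : u + v + w = 0) (huv : u ≠ 0 ∨ v ≠ 0)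
    (hpos : ∀ θ ∈ D, 0 < p + θ * u ∧ 0 < q + θ * v ∧ 0 < r + θ * w) :
    StrictConcaveOn ℝ D fun θ => lob (p + θ * u) + lob (q + θ * v) + lob (r + θ * w) := by
  have hline (c d θ : ℝ) : HasDerivAt (fun θ => c + θ * d) d θ :=
    (hasDerivAt_mul_const d).const_add c
  have hsin : ∀ θ ∈ D,
      sin (p + θ * u) ≠ 0 ∧ sin (q + θ * v) ≠ 0 ∧ sin (r + θ * w) ≠ 0 := by
    intro θ hθ
    obtain ⟨h1, h2, h3⟩ := hpos θ hθ
    have hsum : (p + θ * u) + (q + θ * v) + (r + θ * w) = π := by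
      linear_combination hpqr + θ * huvw
    exact ⟨(sin_pos_of_pos_of_lt_pi h1 (by linarith)).ne',
      (sin_pos_of_pos_of_lt_pi h2 (by linarith)).ne',
      (sin_pos_of_pos_of_lt_pi h3 (by linarith)).ne'⟩
  refine strictConcaveOn_of_hasDerivAt2_neg hD
    (f' := fun θ => -log (2 * sin (p + θ * u)) * u + -log (2 * sin (q + θ * v)) * v
      + -log (2 * sin (r + θ * w)) * w)
    (f'' := fun θ =>
      -(cot (p + θ * u) * u ^ 2 + cot (q + θ * v) * v ^ 2 + cot (r + θ * w) * w ^ 2))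
    (fun θ hθ => ?_) (fun θ hθ => ?_) (fun θ hθ => ?_)
  · obtain ⟨h1, h2, h3⟩ := hsin θ hθ
    exact (((hasDerivAt_lob h1).comp θ (hline p u θ)).add
      ((hasDerivAt_lob h2).comp θ (hline q v θ))).add ((hasDerivAt_lob h3).comp θ (hline r w θ))
  · obtain ⟨h1, h2, h3⟩ := hsin θ hθ
    refine (((((hasDerivAt_neg_log_two_mul_sin h1).comp θ (hline p u θ)).mul_const u).add
      (((hasDerivAt_neg_log_two_mul_sin h2).comp θ (hline q v θ)).mul_const v)).add
      (((hasDerivAt_neg_log_two_mul_sin h3).comp θ (hline r w θ)).mul_const w)).congr_deriv ?_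
    ring
  · obtain ⟨h1, h2, h3⟩ := hpos θ hθ
    exact neg_neg_of_pos (cot_mul_sq_add_cot_mul_sq_add_cot_mul_sq_pos h1 h2 h3
      (by linear_combination hpqr + θ * huvw) huvw huv)

theorem Convex.strictConcaveOn_of_segment {E : Type*} [AddCommGroup E] [Module ℝ E] {s : Set E}
    (hs : Convex ℝ s) {f : E → ℝ}
    (h : ∀ x ∈ s, ∀ y ∈ s, x ≠ y →
      StrictConcaveOn ℝ (Icc 0 1) fun θ : ℝ => f (x + θ • (y - x))) :
    StrictConcaveOn ℝ s f := by
  refine ⟨hs, fun x hx y hy hxy a b ha hb hab => ?_⟩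
  have := (h x hx y hy hxy).2 (left_mem_Icc.2 zero_le_one) (right_mem_Icc.2 zero_le_one)
    zero_ne_one ha hb hab
  obtain rfl : a = 1 - b := by linarith
  simp only [smul_eq_mul, mul_zero, mul_one, zero_add, zero_smul, add_zero, one_smul,
    add_sub_cancel] at this
  rwa [show x + b • (y - x) = (1 - b) • x + b • y by module] at this

theorem convex_setOf_forall_mem {ι E : Type*} [AddCommGroup E] [Module ℝ E] {s : ι → Set E}
    (hs : ∀ i, Convex ℝ (s i)) : Convex ℝ {x : ι → E | ∀ i, x i ∈ s i} :=
  fun _ hx _ hy _ _ ha hb hab i => hs i (hx i) (hy i) ha hb hab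

theorem strictConcaveOn_sum_apply {ι E : Type*} [Fintype ι] [AddCommGroup E] [Module ℝ E]
    {s : ι → Set E} {f : ι → E → ℝ} (hf : ∀ i, StrictConcaveOn ℝ (s i) (f i)) :
    StrictConcaveOn ℝ {x : ι → E | ∀ i, x i ∈ s i} fun x => ∑ i, f i (x i) := by
  refine ⟨convex_setOf_forall_mem fun i => (hf i).1, fun x hx y hy hxy a b ha hb hab => ?_⟩
  obtain ⟨i, hi⟩ := Function.ne_iff.mp hxy
  simp only [smul_eq_mul, Finset.mul_sum, ← Finset.sum_add_distrib]
  exact Finset.sum_lt_sum (fun j _ => (hf j).concaveOn.2 (hx j) (hy j) ha.le hb.le hab)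
    ⟨i, Finset.mem_univ i, (hf i).2 (hx i) (hy i) hi ha hb hab⟩

def angleTriangle : Set (Fin 2 → ℝ) := {x | 0 < x 0 ∧ 0 < x 1 ∧ x 0 + x 1 < π}

noncomputable def faceEnergy (x : Fin 2 → ℝ) : ℝ := lob (x 0) + lob (x 1) + lob (π - x 0 - x 1)

def angleSimplex : Set (Fin 3 → ℝ) := {x | (0 < x 0 ∧ 0 < x 1 ∧ 0 < x 2) ∧ x 0 + x 1 + x 2 = π}

theorem convex_angleTriangle : Convex ℝ angleTriangle := fun x hx y hy a b ha hb hab =>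
  ⟨convex_Ioi (0 : ℝ) hx.1 hy.1 ha hb hab, convex_Ioi (0 : ℝ) hx.2.1 hy.2.1 ha hb hab, by
    have := convex_Iio π hx.2.2 hy.2.2 ha hb hab
    simp only [mem_Iio, smul_eq_mul, Pi.add_apply, Pi.smul_apply] at this ⊢
    linarith⟩

theorem convex_angleSimplex : Convex ℝ angleSimplex := fun x hx y hy a b ha hb hab =>
  ⟨⟨convex_Ioi (0 : ℝ) hx.1.1 hy.1.1 ha hb hab, convex_Ioi (0 : ℝ) hx.1.2.1 hy.1.2.1 ha hb hab,
    convex_Ioi (0 : ℝ) hx.1.2.2 hy.1.2.2 ha hb hab⟩, by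
    simp only [smul_eq_mul, Pi.add_apply, Pi.smul_apply]
    linear_combination a * hx.2 + b * hy.2 + π * hab⟩

theorem strictConcaveOn_faceEnergy : StrictConcaveOn ℝ angleTriangle faceEnergy := by
  refine convex_angleTriangle.strictConcaveOn_of_segment fun x hx y hy hxy => ?_
  have huv : y 0 - x 0 ≠ 0 ∨ y 1 - x 1 ≠ 0 := by
    by_contra! h
    exact hxy (funext (Fin.forall_fin_two.2 ⟨by linarith [h.1], by linarith [h.2]⟩))
  have hpos : ∀ θ ∈ Icc (0 : ℝ) 1, 0 < x 0 + θ * (y 0 - x 0) ∧ 0 < x 1 + θ * (y 1 - x 1) ∧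
      0 < (π - x 0 - x 1) + θ * (-(y 0 - x 0) - (y 1 - x 1)) := by
    intro θ hθ
    have hmem := convex_angleTriangle hx hy (sub_nonneg.2 hθ.2) hθ.1 (sub_add_cancel 1 θ)
    simp only [angleTriangle, mem_ofPred_eq, Pi.add_apply, Pi.smul_apply, smul_eq_mul] at hmem
    refine ⟨?_, ?_, ?_⟩ <;> linarith
  convert strictConcaveOn_lob_add_lob_add_lob_of_line (convex_Icc 0 1)
    (by ring : x 0 + x 1 + (π - x 0 - x 1) = π) (by ring) huv hpos using 2 with θ
  simp only [faceEnergy, Pi.add_apply, Pi.smul_apply, Pi.sub_apply, smul_eq_mul]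
  congr 2
  ring

theorem energy_concave (F : Type*) [Fintype F] :
    ConcaveOn ℝ
      {A : F → Fin 3 → ℝ | ∀ t, (0 < A t 0 ∧ 0 < A t 1 ∧ 0 < A t 2) ∧
        A t 0 + A t 1 + A t 2 = Real.pi}
      (fun A => ∑ t, (lob (A t 0) + lob (A t 1) + lob (A t 2))) ∧
    StrictConcaveOn ℝ
      {B : F → Fin 2 → ℝ | ∀ t, 0 < B t 0 ∧ 0 < B t 1 ∧ B t 0 + B t 1 < Real.pi}
      (fun B => ∑ t, (lob (B t 0) + lob (B t 1) + lob (Real.pi - B t 0 - B t 1))) := by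
  have hstrict := strictConcaveOn_sum_apply (ι := F) fun _ => strictConcaveOn_faceEnergy
  refine ⟨?_, hstrict⟩
  -- `L` forgets the third angle of every face.
  let L := (LinearMap.funLeft ℝ ℝ ![(0 : Fin 3), 1]).compLeft F
  refine ((hstrict.concaveOn.comp_linearMap L).subset (fun A hA t => ?_)
    (convex_setOf_forall_mem fun _ => convex_angleSimplex)).congr fun A hA => ?_
  · obtain ⟨⟨h0, h1, h2⟩, hsum⟩ := hA t
    exact ⟨h0, h1, show A t 0 + A t 1 < π by linarith⟩
  · refine Finset.sum_congr rfl fun t _ => ?_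
    obtain ⟨-, hsum⟩ := hA t
    show lob (A t 0) + lob (A t 1) + lob (π - A t 0 - A t 1) = _
    rw [show π - A t 0 - A t 1 = A t 2 by linarith]
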